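/- Conditional Lindeberg bound used in the CLT for the plug-in estimator: let (X_t)_{t ≥ 1} be real-valued random variables such that for each t the law of X_t has a Lebesgue density bounded by C₀ t^{−1/2} for a constant C₀ > 0. Let k_n = [a n^κ] for constants a > 0 and κ ∈ (0, 1/8). Then (1/n) Σ_{t=1}^n E[(Σ_{i=0}^{k_n−1} ℋ_i(X_t)²)²] → 0 as n → ∞. -/

import Mathlib

/-!
Write `wₙ = Hₙ² e^{-x²}`, so that `ℋₙ² = wₙ / ∫ wₙ`. Integrating by parts against the three-term
recurrence gives `∫ wₙ₊₁ = 2(n+1) ∫ wₙ`. The derivative of `wₙ` is bounded by a combination of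
`wₙ₋₁, wₙ, wₙ₊₁`, so integrating it from `-∞` yields the uniform bound `ℋₙ² ≤ 2(n+1)`.
Hence `Sₖ = ∑_{i<k} ℋᵢ²` satisfies `Sₖ ≤ 2k²` and `∫ Sₖ = k`, so `∫ Sₖ² ≤ 2k³`. A density bounded
by `C₀ t^{-1/2}` gives `E[Sₖ(X_t)²] ≤ 2 C₀ k³ t^{-1/2}`, and `∑_{t ≤ n} t^{-1/2} ≤ 2√n` bounds the
average by `4 C₀ k_n³ / √n ≤ 4 C₀ a³ n^{3κ - 1/2} → 0`.
-/

open MeasureTheory Real Filter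

/-- Physicists' Hermite polynomials: `H 0 = 1`, `H 1 = 2x`,
`H (i+1) = 2x * H i - 2i * H (i-1)`. -/
noncomputable def physHermite : ℕ → ℝ → ℝ
  | 0 => fun _ => 1
  | 1 => fun x => 2 * x
  | n + 2 => fun x => 2 * x * physHermite (n + 1) x - 2 * (n + 1) * physHermite n x

/-- Hermite functions `ℋ_i(x) = (√π 2^i i!)^{-1/2} H_i(x) e^{-x²/2}`. -/
noncomputable def hermiteFun (i : ℕ) (x : ℝ) : ℝ :=
  (Real.sqrt (Real.sqrt Real.pi * 2 ^ i * Nat.factorial i))⁻¹ * physHermite i x *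
    Real.exp (-x ^ 2 / 2)

open Polynomial

theorem integrable_eval_mul_exp_neg_sq (p : ℝ[X]) :
    Integrable fun x : ℝ => p.eval x * exp (-x ^ 2) := by
  induction p using Polynomial.induction_on' with
  | add p q hp hq =>
    simp only [eval_add, add_mul]
    exact hp.add hq
  | monomial n c =>
    have h := (integrable_rpow_mul_exp_neg_mul_sq one_pos
      (neg_one_lt_zero.trans_le n.cast_nonneg)).const_mul c
    simpa only [eval_monomial, rpow_natCast, neg_one_mul, mul_assoc] using h

theorem le_integral_of_hasDerivAt_of_abs_le {f f' g : ℝ → ℝ}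
    (hf : ∀ x, HasDerivAt f (f' x) x) (hfi : Integrable f) (hg : Integrable g)
    (hf'g : ∀ x, |f' x| ≤ g x) (x : ℝ) : f x ≤ ∫ y, g y := by
  have hf'_eq : f' = deriv f := funext fun y => (hf y).deriv.symm
  have hf'i : Integrable f' :=
    hg.mono' (hf'_eq ▸ (measurable_deriv f).aestronglyMeasurable)
      (Eventually.of_forall fun y => (Real.norm_eq_abs _).trans_le (hf'g y))
  have hbot : Tendsto f atBot (nhds 0) :=
    tendsto_zero_of_hasDerivAt_of_integrableOn_Iic (a := 0) (fun y _ => hf y)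
      hf'i.integrableOn hfi.integrableOn
  calc f x = ∫ y in Set.Iic x, f' y := by
        rw [integral_Iic_of_hasDerivAt_of_tendsto' (fun y _ => hf y) hf'i.integrableOn hbot,
          sub_zero]
    _ ≤ ∫ y in Set.Iic x, g y :=
      setIntegral_mono hf'i.integrableOn hg.integrableOn fun y => (le_abs_self _).trans (hf'g y)
    _ ≤ ∫ y, g y :=
      setIntegral_le_integral hg (Eventually.of_forall fun y => (abs_nonneg _).trans (hf'g y))

theorem integral_comp_le_of_density_le {Ω : Type*} [MeasurableSpace Ω] (P : Measure Ω)
    {Y : Ω → ℝ} (hY : Measurable Y) {f : ℝ → ℝ} {c : ℝ} (hc : 0 ≤ c)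
    (hmap : P.map Y = volume.withDensity fun y => ENNReal.ofReal (f y)) (hfc : ∀ y, f y ≤ c)
    {G : ℝ → ℝ} (hGm : Measurable G) (hG0 : ∀ y, 0 ≤ G y) (hGi : Integrable G) :
    ∫ ω, G (Y ω) ∂P ≤ c * ∫ y, G y := by
  have hle : P.map Y ≤ ENNReal.ofReal c • volume := by
    rw [hmap, ← withDensity_const]
    exact withDensity_mono (Eventually.of_forall fun y => ENNReal.ofReal_le_ofReal (hfc y))
  calc ∫ ω, G (Y ω) ∂P = ∫ y, G y ∂(P.map Y) :=
        (integral_map hY.aemeasurable hGm.aestronglyMeasurable).symm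
    _ ≤ ∫ y, G y ∂(ENNReal.ofReal c • volume) :=
        integral_mono_measure hle (Eventually.of_forall hG0)
          (hGi.smul_measure ENNReal.ofReal_ne_top)
    _ = c * ∫ y, G y := by rw [integral_smul_measure, ENNReal.toReal_ofReal hc, smul_eq_mul]

-- At `n = 0` the truncated `n - 1` is harmless: its coefficient vanishes.
theorem physHermite_succ (n : ℕ) (x : ℝ) :
    physHermite (n + 1) x = 2 * x * physHermite n x - 2 * n * physHermite (n - 1) x := by
  cases n with
  | zero => simp [physHermite]
  | succ n => rw [physHermite]; push_cast; ring

theorem exists_eval_eq_physHermite (n : ℕ) :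
    ∃ p : ℝ[X], ∀ x, p.eval x = physHermite n x := by
  induction n using Nat.twoStepInduction with
  | zero => exact ⟨1, fun x => by simp [physHermite]⟩
  | one => exact ⟨C 2 * X, fun x => by simp [physHermite]⟩
  | more n hp hq =>
    obtain ⟨p, hp⟩ := hp
    obtain ⟨q, hq⟩ := hq
    refine ⟨C 2 * X * q - C (2 * ((n : ℝ) + 1)) * p, fun x => ?_⟩
    simp [physHermite, hp, hq]

theorem hasDerivAt_physHermite (n : ℕ) (x : ℝ) :
    HasDerivAt (physHermite n) (2 * n * physHermite (n - 1) x) x := by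
  induction n using Nat.twoStepInduction generalizing x with
  | zero => simpa [physHermite] using hasDerivAt_const x (1 : ℝ)
  | one => simpa [physHermite] using (hasDerivAt_id x).const_mul (2 : ℝ)
  | more n hn hn1 =>
    show HasDerivAt (fun y => 2 * y * physHermite (n + 1) y - 2 * (n + 1) * physHermite n y) _ x
    refine ((((hasDerivAt_id' x).const_mul 2).mul (hn1 x)).sub
      ((hn x).const_mul (2 * ((n : ℝ) + 1)))).congr_deriv ?_
    rw [show n + 2 - 1 = n + 1 from rfl, physHermite_succ n]
    push_cast
    ring

@[fun_prop]
theorem continuous_physHermite (n : ℕ) : Continuous (physHermite n) :=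
  continuous_iff_continuousAt.2 fun x => (hasDerivAt_physHermite n x).continuousAt

theorem integrable_physHermite_mul_physHermite_mul_exp (m n : ℕ) :
    Integrable fun x => physHermite m x * physHermite n x * exp (-x ^ 2) := by
  obtain ⟨p, hp⟩ := exists_eval_eq_physHermite m
  obtain ⟨q, hq⟩ := exists_eval_eq_physHermite n
  simpa only [eval_mul, hp, hq] using integrable_eval_mul_exp_neg_sq (p * q)

theorem integrable_physHermite_sq_mul_exp (n : ℕ) :
    Integrable fun x => physHermite n x ^ 2 * exp (-x ^ 2) := by
  simpa only [sq] using integrable_physHermite_mul_physHermite_mul_exp n n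

theorem hasDerivAt_physHermite_mul_physHermite_mul_exp (m n : ℕ) (x : ℝ) :
    HasDerivAt (fun y => physHermite m y * physHermite n y * exp (-y ^ 2))
      ((2 * m * physHermite (m - 1) x * physHermite n x +
        2 * n * physHermite m x * physHermite (n - 1) x -
        2 * x * physHermite m x * physHermite n x) * exp (-x ^ 2)) x := by
  have he : HasDerivAt (fun y => exp (-y ^ 2)) (exp (-x ^ 2) * (-(2 * x))) x := by
    simpa using ((hasDerivAt_pow 2 x).neg).exp
  refine (((hasDerivAt_physHermite m x).mul (hasDerivAt_physHermite n x)).mul he).congr_deriv ?_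
  simp only [Pi.mul_apply]
  ring

theorem integral_physHermite_succ_sq_mul_exp (n : ℕ) :
    ∫ x, physHermite (n + 1) x ^ 2 * exp (-x ^ 2) =
      2 * (n + 1) * ∫ x, physHermite n x ^ 2 * exp (-x ^ 2) := by
  have hderiv : ∀ x, HasDerivAt (fun y => physHermite (n + 1) y * physHermite n y * exp (-y ^ 2))
      (2 * (n + 1) * (physHermite n x ^ 2 * exp (-x ^ 2)) -
        physHermite (n + 1) x ^ 2 * exp (-x ^ 2)) x := fun x => by
    refine (hasDerivAt_physHermite_mul_physHermite_mul_exp (n + 1) n x).congr_deriv ?_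
    rw [Nat.add_sub_cancel, physHermite_succ n x]
    push_cast
    ring
  have hn := (integrable_physHermite_sq_mul_exp n).const_mul (2 * ((n : ℝ) + 1))
  have hn1 := integrable_physHermite_sq_mul_exp (n + 1)
  have h := integral_eq_zero_of_hasDerivAt_of_integrable hderiv (hn.sub hn1)
    (integrable_physHermite_mul_physHermite_mul_exp (n + 1) n)
  rw [integral_sub hn hn1, integral_const_mul, sub_eq_zero] at h
  exact h.symm

theorem integral_physHermite_sq_mul_exp (n : ℕ) :
    ∫ x, physHermite n x ^ 2 * exp (-x ^ 2) = √π * 2 ^ n * n.factorial := by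
  induction n with
  | zero => simpa [physHermite] using integral_gaussian 1
  | succ n ih =>
    rw [integral_physHermite_succ_sq_mul_exp, ih, Nat.factorial_succ]
    push_cast
    ring

theorem hasDerivAt_physHermite_sq_mul_exp (n : ℕ) (x : ℝ) :
    HasDerivAt (fun y => physHermite n y ^ 2 * exp (-y ^ 2))
      ((2 * n * physHermite (n - 1) x - physHermite (n + 1) x) * physHermite n x * exp (-x ^ 2))
      x := by
  have h := hasDerivAt_physHermite_mul_physHermite_mul_exp n n x
  simp only [← sq] at h
  refine h.congr_deriv ?_
  rw [physHermite_succ]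
  ring

theorem physHermite_sq_mul_exp_le (n : ℕ) (x : ℝ) :
    physHermite n x ^ 2 * exp (-x ^ 2) ≤
      2 * (n + 1) * ∫ y, physHermite n y ^ 2 * exp (-y ^ 2) := by
  set w : ℕ → ℝ → ℝ := fun k y => physHermite k y ^ 2 * exp (-y ^ 2) with hw
  have hi1 := (integrable_physHermite_sq_mul_exp (n - 1)).const_mul n
  have hi2 := (integrable_physHermite_sq_mul_exp n).const_mul (n + 1 / 2)
  have hi3 := (integrable_physHermite_sq_mul_exp (n + 1)).const_mul (1 / 2)
  have hi12 : Integrable fun y => n * w (n - 1) y + (n + 1 / 2) * w n y := hi1.add hi2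
  have hderiv_le : ∀ y, |(2 * n * physHermite (n - 1) y - physHermite (n + 1) y) *
      physHermite n y * exp (-y ^ 2)| ≤
        n * w (n - 1) y + (n + 1 / 2) * w n y + 1 / 2 * w (n + 1) y := fun y => by
    have hn : (0 : ℝ) ≤ n := n.cast_nonneg
    -- AM-GM with `(a, b, c) = (Hₙ₋₁, Hₙ, Hₙ₊₁)`: `|(2n a - c) b| ≤ n (a² + b²) + (b² + c²) / 2`
    simp only [hw, abs_mul, abs_of_pos (exp_pos _), ← add_mul, ← mul_assoc]
    gcongr
    rw [← abs_mul, abs_le]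
    constructor
    · nlinarith [mul_nonneg hn (sq_nonneg (physHermite (n - 1) y + physHermite n y)),
        sq_nonneg (physHermite n y - physHermite (n + 1) y)]
    · nlinarith [mul_nonneg hn (sq_nonneg (physHermite (n - 1) y - physHermite n y)),
        sq_nonneg (physHermite n y + physHermite (n + 1) y)]
  have hle : w n x ≤ ∫ y, (n * w (n - 1) y + (n + 1 / 2) * w n y + 1 / 2 * w (n + 1) y) :=
    le_integral_of_hasDerivAt_of_abs_le (hasDerivAt_physHermite_sq_mul_exp n)
      (integrable_physHermite_sq_mul_exp n) (hi12.add hi3) hderiv_le x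
  have hrec : ∀ k, ∫ y, w (k + 1) y = 2 * (k + 1) * ∫ y, w k y :=
    integral_physHermite_succ_sq_mul_exp
  have hpred : n * ∫ y, w (n - 1) y ≤ 1 / 2 * ∫ y, w n y := by
    cases n with
    | zero => simpa using integral_nonneg fun y => mul_nonneg (sq_nonneg _) (exp_pos _).le
    | succ m => rw [Nat.add_sub_cancel, hrec m]; push_cast; linarith
  rw [integral_add hi12 hi3, integral_add hi1 hi2, integral_const_mul,
    integral_const_mul, integral_const_mul, hrec] at hle
  linarith

theorem integral_physHermite_sq_mul_exp_pos (n : ℕ) :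
    0 < ∫ x, physHermite n x ^ 2 * exp (-x ^ 2) := by
  rw [integral_physHermite_sq_mul_exp]
  positivity

theorem hermiteFun_sq (n : ℕ) (x : ℝ) :
    hermiteFun n x ^ 2 =
      physHermite n x ^ 2 * exp (-x ^ 2) / ∫ y, physHermite n y ^ 2 * exp (-y ^ 2) := by
  have hexp : exp (-x ^ 2 / 2) ^ 2 = exp (-x ^ 2) := by rw [← exp_nat_mul]; ring_nf
  rw [integral_physHermite_sq_mul_exp, hermiteFun, mul_pow, mul_pow, inv_pow,
    sq_sqrt (by positivity), hexp]
  ring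

@[fun_prop]
theorem continuous_hermiteFun (n : ℕ) : Continuous (hermiteFun n) := by
  unfold hermiteFun
  fun_prop

theorem integrable_hermiteFun_sq (n : ℕ) : Integrable fun x => hermiteFun n x ^ 2 := by
  simpa only [hermiteFun_sq] using (integrable_physHermite_sq_mul_exp n).div_const _

theorem integral_hermiteFun_sq (n : ℕ) : ∫ x, hermiteFun n x ^ 2 = 1 := by
  simp only [hermiteFun_sq]
  rw [integral_div, div_self (integral_physHermite_sq_mul_exp_pos n).ne']

theorem hermiteFun_sq_le (n : ℕ) (x : ℝ) : hermiteFun n x ^ 2 ≤ 2 * (n + 1) := by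
  rw [hermiteFun_sq, div_le_iff₀ (integral_physHermite_sq_mul_exp_pos n)]
  exact physHermite_sq_mul_exp_le n x

theorem sum_hermiteFun_sq_le (k : ℕ) (x : ℝ) :
    ∑ i ∈ Finset.range k, hermiteFun i x ^ 2 ≤ 2 * k ^ 2 := by
  calc ∑ i ∈ Finset.range k, hermiteFun i x ^ 2
      ≤ (Finset.range k).card • (2 * (k : ℝ)) := by
        refine Finset.sum_le_card_nsmul _ _ _ fun i hi => (hermiteFun_sq_le i x).trans ?_
        have : (i : ℝ) + 1 ≤ k := by exact_mod_cast Finset.mem_range.1 hi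
        linarith
    _ = 2 * k ^ 2 := by rw [Finset.card_range, nsmul_eq_mul]; ring

theorem integrable_sum_hermiteFun_sq (k : ℕ) :
    Integrable fun x => ∑ i ∈ Finset.range k, hermiteFun i x ^ 2 :=
  integrable_finsetSum _ fun i _ => integrable_hermiteFun_sq i

theorem integral_sum_hermiteFun_sq (k : ℕ) :
    ∫ x, ∑ i ∈ Finset.range k, hermiteFun i x ^ 2 = k := by
  rw [integral_finsetSum _ fun i _ => integrable_hermiteFun_sq i]
  simp [integral_hermiteFun_sq]

theorem sq_sum_hermiteFun_sq_le (k : ℕ) (x : ℝ) :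
    (∑ i ∈ Finset.range k, hermiteFun i x ^ 2) ^ 2 ≤
      2 * k ^ 2 * ∑ i ∈ Finset.range k, hermiteFun i x ^ 2 := by
  rw [sq]
  exact mul_le_mul_of_nonneg_right (sum_hermiteFun_sq_le k x)
    (Finset.sum_nonneg fun i _ => sq_nonneg _)

theorem integrable_sq_sum_hermiteFun_sq (k : ℕ) :
    Integrable fun x => (∑ i ∈ Finset.range k, hermiteFun i x ^ 2) ^ 2 :=
  ((integrable_sum_hermiteFun_sq k).const_mul (2 * (k : ℝ) ^ 2)).mono' (by fun_prop)
    (Eventually.of_forall fun x => by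
      rw [norm_of_nonneg (sq_nonneg _)]
      exact sq_sum_hermiteFun_sq_le k x)

theorem integral_sq_sum_hermiteFun_sq_le (k : ℕ) :
    ∫ x, (∑ i ∈ Finset.range k, hermiteFun i x ^ 2) ^ 2 ≤ 2 * k ^ 3 :=
  calc ∫ x, (∑ i ∈ Finset.range k, hermiteFun i x ^ 2) ^ 2
      ≤ ∫ x, 2 * k ^ 2 * ∑ i ∈ Finset.range k, hermiteFun i x ^ 2 :=
        integral_mono (integrable_sq_sum_hermiteFun_sq k)
          ((integrable_sum_hermiteFun_sq k).const_mul _) (sq_sum_hermiteFun_sq_le k)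
    _ = 2 * k ^ 3 := by rw [integral_const_mul, integral_sum_hermiteFun_sq]; ring

theorem integral_sq_sum_hermiteFun_sq_comp_le {Ω : Type*} [MeasurableSpace Ω] (P : Measure Ω)
    {Y : Ω → ℝ} (hY : Measurable Y) {f : ℝ → ℝ} {c : ℝ} (hc : 0 ≤ c)
    (hmap : P.map Y = volume.withDensity fun y => ENNReal.ofReal (f y)) (hfc : ∀ y, f y ≤ c)
    (k : ℕ) :
    ∫ ω, (∑ i ∈ Finset.range k, hermiteFun i (Y ω) ^ 2) ^ 2 ∂P ≤ 2 * c * k ^ 3 :=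
  calc ∫ ω, (∑ i ∈ Finset.range k, hermiteFun i (Y ω) ^ 2) ^ 2 ∂P
      ≤ c * ∫ y, (∑ i ∈ Finset.range k, hermiteFun i y ^ 2) ^ 2 :=
        integral_comp_le_of_density_le P hY hc hmap hfc (by fun_prop) (fun y => sq_nonneg _)
          (integrable_sq_sum_hermiteFun_sq k)
    _ ≤ c * (2 * k ^ 3) := by gcongr; exact integral_sq_sum_hermiteFun_sq_le k
    _ = 2 * c * k ^ 3 := by ring

theorem sum_Icc_rpow_neg_half_le (n : ℕ) :
    ∑ t ∈ Finset.Icc 1 n, (t : ℝ) ^ (-(1 : ℝ) / 2) ≤ 2 * √n := by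
  induction n with
  | zero => simp
  | succ m ih =>
    rw [Finset.sum_Icc_succ_top (by omega)]
    have hu : 0 < √((m : ℝ) + 1) := sqrt_pos.2 (by positivity)
    have hsq : √((m : ℝ) + 1) ^ 2 = √(m : ℝ) ^ 2 + 1 := by
      rw [sq_sqrt (by positivity), sq_sqrt (by positivity)]
    have hterm : ((m + 1 : ℕ) : ℝ) ^ (-(1 : ℝ) / 2) = (√((m : ℝ) + 1))⁻¹ := by
      rw [neg_div, rpow_neg (by positivity), ← sqrt_eq_rpow]
      push_cast
      rfl
    have hstep : (√((m : ℝ) + 1))⁻¹ ≤ 2 * (√((m : ℝ) + 1) - √(m : ℝ)) := by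
      rw [inv_le_iff_one_le_mul₀ hu]
      nlinarith [sq_nonneg (√((m : ℝ) + 1) - √(m : ℝ))]
    rw [hterm]
    push_cast
    linarith

theorem one_div_mul_sum_Icc_le_of_le_rpow_neg_half {n : ℕ} (hn : 1 ≤ n) {b : ℝ} (hb : 0 ≤ b)
    {u : ℕ → ℝ} (hu : ∀ t ∈ Finset.Icc 1 n, u t ≤ b * (t : ℝ) ^ (-(1 : ℝ) / 2)) :
    1 / (n : ℝ) * ∑ t ∈ Finset.Icc 1 n, u t ≤ 2 * b / √n := by
  have hn : (0 : ℝ) < n := by exact_mod_cast hn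
  calc 1 / (n : ℝ) * ∑ t ∈ Finset.Icc 1 n, u t
      ≤ 1 / (n : ℝ) * (b * ∑ t ∈ Finset.Icc 1 n, (t : ℝ) ^ (-(1 : ℝ) / 2)) := by
        gcongr
        rw [Finset.mul_sum]
        exact Finset.sum_le_sum hu
    _ ≤ 1 / (n : ℝ) * (b * (2 * √n)) := by
        gcongr
        exact sum_Icc_rpow_neg_half_le n
    _ = 2 * b / √n := by
        have hs : √(n : ℝ) ^ 2 = n := sq_sqrt hn.le
        field_simp
        rw [hs, mul_comm]

theorem tendsto_floor_mul_rpow_pow_three_div_sqrt {a κ : ℝ} (ha : 0 ≤ a) (hκ : κ < 1 / 6) :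
    Tendsto (fun n : ℕ => (⌊a * (n : ℝ) ^ κ⌋₊ : ℝ) ^ 3 / √n) atTop (nhds 0) := by
  have hpow : Tendsto (fun n : ℕ => a ^ 3 * (n : ℝ) ^ (-(1 / 2 - 3 * κ))) atTop (nhds 0) := by
    have h := ((tendsto_rpow_neg_atTop (by linarith : 0 < 1 / 2 - 3 * κ)).comp
      tendsto_natCast_atTop_atTop).const_mul (a ^ 3)
    rwa [mul_zero] at h
  refine squeeze_zero' (Eventually.of_forall fun n => by positivity)
    (eventually_atTop.2 ⟨1, fun n hn => ?_⟩) hpow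
  have hn : (0 : ℝ) < n := by exact_mod_cast hn
  calc (⌊a * (n : ℝ) ^ κ⌋₊ : ℝ) ^ 3 / √n ≤ (a * (n : ℝ) ^ κ) ^ 3 / √n := by
        gcongr
        exact Nat.floor_le (by positivity)
    _ = a ^ 3 * (n : ℝ) ^ (-(1 / 2 - 3 * κ)) := by
      rw [sqrt_eq_rpow, mul_pow, ← rpow_natCast ((n : ℝ) ^ κ), ← rpow_mul hn.le,
        mul_div_assoc, ← rpow_sub hn]
      ring_nf

theorem lindeberg_bound_general
    {Ω : Type*} [MeasurableSpace Ω] (P : Measure Ω)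
    (X : ℕ → Ω → ℝ) (hmeas : ∀ t, Measurable (X t))
    (C₀ : ℝ) (hC₀ : 0 < C₀)
    (hdens : ∀ t : ℕ, 1 ≤ t → ∃ f : ℝ → ℝ,
      (Measure.map (X t) P = volume.withDensity fun y => ENNReal.ofReal (f y)) ∧
      ∀ y : ℝ, 0 ≤ f y ∧ f y ≤ C₀ * (t : ℝ) ^ (-(1 : ℝ) / 2))
    (a κ : ℝ) (ha : 0 < a) (hκ : κ < 1 / 8) :
    Tendsto
      (fun n : ℕ =>
        (1 / (n : ℝ)) * ∑ t ∈ Finset.Icc 1 n,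
          ∫ ω, (∑ i ∈ Finset.range ⌊a * (n : ℝ) ^ κ⌋₊,
            hermiteFun i (X t ω) ^ 2) ^ 2 ∂P)
      atTop (nhds 0) := by
  have hterm : ∀ k t : ℕ, 1 ≤ t →
      ∫ ω, (∑ i ∈ Finset.range k, hermiteFun i (X t ω) ^ 2) ^ 2 ∂P ≤
        2 * C₀ * k ^ 3 * (t : ℝ) ^ (-(1 : ℝ) / 2) := fun k t ht => by
    obtain ⟨f, hmap, hf⟩ := hdens t ht
    have h := integral_sq_sum_hermiteFun_sq_comp_le P (hmeas t) (by positivity) hmap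
      (fun y => (hf y).2) k
    linarith
  have hlim := (tendsto_floor_mul_rpow_pow_three_div_sqrt ha.le
    (by linarith : κ < 1 / 6)).const_mul (4 * C₀)
  rw [mul_zero] at hlim
  refine squeeze_zero' (Eventually.of_forall fun n => ?_)
    (eventually_atTop.2 ⟨1, fun n hn => ?_⟩) hlim
  · exact mul_nonneg (by positivity)
      (Finset.sum_nonneg fun t _ => integral_nonneg fun ω => sq_nonneg _)
  refine (one_div_mul_sum_Icc_le_of_le_rpow_neg_half hn (by positivity)
    fun t ht => hterm _ t (Finset.mem_Icc.1 ht).1).trans_eq ?_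
  ring

/-- Conditional Lindeberg bound used in the CLT for the plug-in estimator: if each `X_t`
has a Lebesgue density bounded by `C₀ t^{-1/2}` and `k_n = ⌊a n^κ⌋` with `κ ∈ (0, 1/8)`,
then `(1/n) Σ_{t=1}^n E[(Σ_{i<k_n} ℋ_i(X_t)²)²] → 0`. -/
theorem lindeberg_bound
    {Ω : Type*} [MeasurableSpace Ω] (P : Measure Ω) [IsProbabilityMeasure P]
    (X : ℕ → Ω → ℝ) (hmeas : ∀ t, Measurable (X t))
    (C₀ : ℝ) (hC₀ : 0 < C₀)
    (hdens : ∀ t : ℕ, 1 ≤ t → ∃ f : ℝ → ℝ,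
      (Measure.map (X t) P = volume.withDensity fun y => ENNReal.ofReal (f y)) ∧
      ∀ y : ℝ, 0 ≤ f y ∧ f y ≤ C₀ * (t : ℝ) ^ (-(1 : ℝ) / 2))
    (a κ : ℝ) (ha : 0 < a) (hκ0 : 0 < κ) (hκ : κ < 1 / 8) :
    Tendsto
      (fun n : ℕ =>
        (1 / (n : ℝ)) * ∑ t ∈ Finset.Icc 1 n,
          ∫ ω, (∑ i ∈ Finset.range ⌊a * (n : ℝ) ^ κ⌋₊,
            hermiteFun i (X t ω) ^ 2) ^ 2 ∂P)
      atTop (nhds 0) :=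
  lindeberg_bound_general P X hmeas C₀ hC₀ hdens a κ ha hκ
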